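/- arXiv:1807.10525 — 2 statements merged into one kernel-verified Lean document; each statement's English description precedes it below -/
import Mathlib

section
/- Let m ≥ 1 and let H_m be the group of invertible 2m×2m matrices over 𝔽₂ of the form [[A, AS],[0, (Aᵀ)⁻¹]] with A ∈ GL(m,2) and S symmetric with zero diagonal. Then H_m acts transitively on the set 𝔽₂^{2m} \ Q_m = {(x,y) : xᵀy = 1}. -/
/-!
Since `H_m` is a group, it suffices to move every `(x, y)` with `xᵀy = 1` to the base point
`(e, e)`, `e` a standard basis vector. Choose `B ∈ GL(m)` with `B e = y` and put `A = (Bᵀ)⁻¹`;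
then the only condition left on `S` is `S e = Bᵀx - e`, a vector whose `e`-coordinate is
`xᵀy - 1 = 0`, and every such vector `c` is `S e` for `S = c eᵀ + e cᵀ`. Closure of `H_m` under
products and inverses comes from the congruence `S ↦ A S Aᵀ`, which in characteristic 2
preserves symmetric matrices with zero diagonal because their quadratic forms vanish.
-/

open Matrix

/-- Membership in the group `H_m` of matrices `[[A, AS],[0,(Aᵀ)⁻¹]]` with `A`
invertible and `S` symmetric with zero diagonal. -/
def InH (m : ℕ) (M : Matrix (Fin m ⊕ Fin m) (Fin m ⊕ Fin m) (ZMod 2)) : Prop :=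
  ∃ A S : Matrix (Fin m) (Fin m) (ZMod 2),
    IsUnit A ∧ S.IsSymm ∧ (∀ i, S i i = 0) ∧
    M = Matrix.fromBlocks A (A * S) 0 Aᵀ⁻¹

theorem exists_linearEquiv_apply_eq {K V : Type*} [DivisionRing K] [AddCommGroup V]
    [Module K V] {u v : V} (hu : u ≠ 0) (hv : v ≠ 0) : ∃ g : V ≃ₗ[K] V, g u = v := by
  obtain ⟨g, hg⟩ := Submodule.exists_linearEquiv_restrict_eq
    ((LinearEquiv.toSpanNonzeroSingleton K V u hu).symm ≪≫ₗ
      LinearEquiv.toSpanNonzeroSingleton K V v hv)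
  refine ⟨g, ?_⟩
  have hgu := (hg ⟨u, Submodule.mem_span_singleton_self u⟩).symm
  rw [LinearEquiv.trans_apply, ← LinearEquiv.toSpanNonzeroSingleton_one K V u hu,
    LinearEquiv.symm_apply_apply] at hgu
  simpa using hgu

namespace Matrix

variable {l n R K : Type*} [Fintype n]

theorem exists_isUnit_mulVec_eq [DecidableEq n] [Field K] {u v : n → K} (hu : u ≠ 0)
    (hv : v ≠ 0) : ∃ B : Matrix n n K, IsUnit B ∧ B *ᵥ u = v := by
  obtain ⟨g, hg⟩ := exists_linearEquiv_apply_eq (K := K) hu hv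
  exact ⟨LinearMap.toMatrix' g, LinearMap.isUnit_toMatrix'_iff.mpr
    ((Module.End.isUnit_iff _).mpr g.bijective), by simpa using hg⟩

theorem IsSymm.mul_mul_transpose [CommSemiring R] {S : Matrix n n R} (hS : S.IsSymm)
    (A : Matrix l n R) : (A * S * Aᵀ).IsSymm := by
  rw [IsSymm, transpose_mul, transpose_mul, transpose_transpose, hS.eq, Matrix.mul_assoc]

theorem exists_isSymm_mulVec_single_eq [CommRing R] [DecidableEq n] {c : n → R} {i : n}
    (hc : c i = 0) :
    ∃ S : Matrix n n R, S.IsSymm ∧ (∀ k, S k k = 0) ∧ S *ᵥ Pi.single i 1 = c := by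
  refine ⟨vecMulVec c (Pi.single i 1) + vecMulVec (Pi.single i 1) c, ?_, fun k => ?_, ?_⟩
  · exact IsSymm.ext fun k l => by simp only [add_apply, vecMulVec_apply]; ring
  · by_cases hk : k = i
    · simp [hk, hc, vecMulVec_apply]
    · simp [vecMulVec_apply, hk]
  · rw [add_mulVec, vecMulVec_mulVec, vecMulVec_mulVec]
    simp [hc]

theorem exists_fromBlocks_mulVec_single_eq [DecidableEq n] [Field K] {v : n ⊕ n → K}
    (hv : (v ∘ Sum.inl) ⬝ᵥ (v ∘ Sum.inr) = 1) (i : n) :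
    ∃ A S : Matrix n n K, IsUnit A ∧ S.IsSymm ∧ (∀ k, S k k = 0) ∧
      fromBlocks A (A * S) 0 Aᵀ⁻¹ *ᵥ Sum.elim (Pi.single i 1) (Pi.single i 1) = v := by
  have hy : v ∘ Sum.inr ≠ 0 := by intro h; simp [h] at hv
  obtain ⟨B, hB, hBe⟩ := exists_isUnit_mulVec_eq (Pi.single_ne_zero_iff.mpr one_ne_zero) hy
  have hBd : IsUnit B.det := (isUnit_iff_isUnit_det B).mp hB
  have hBtd : IsUnit Bᵀ.det := by rwa [det_transpose]
  have hc : (Bᵀ *ᵥ (v ∘ Sum.inl) - Pi.single i 1 : n → K) i = 0 := by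
    rw [Pi.sub_apply, ← dotProduct_single_one (Bᵀ *ᵥ _), mulVec_transpose, ← dotProduct_mulVec,
      hBe, hv, Pi.single_eq_same, sub_self]
  obtain ⟨S, hS, hSd, hSe⟩ := exists_isSymm_mulVec_single_eq hc
  refine ⟨Bᵀ⁻¹, S, isUnit_nonsing_inv_iff.mpr ((isUnit_transpose B).mpr hB), hS, hSd, ?_⟩
  rw [transpose_nonsing_inv, transpose_transpose, nonsing_inv_nonsing_inv _ hBd,
    fromBlocks_mulVec, Sum.elim_comp_inl, Sum.elim_comp_inr, zero_mulVec, zero_add, hBe,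
    ← mulVec_mulVec, ← mulVec_add, hSe, add_sub_cancel, mulVec_mulVec, nonsing_inv_mul _ hBtd,
    one_mulVec, Sum.elim_comp_inl_inr]

section CharTwo

variable [CommRing R] [CharP R 2] {S : Matrix n n R}

theorem IsSymm.dotProduct_mulVec_self_eq_zero (hS : S.IsSymm) (hd : ∀ i, S i i = 0)
    (a : n → R) : a ⬝ᵥ S *ᵥ a = 0 := by
  have hsum : a ⬝ᵥ S *ᵥ a = ∑ p : n × n, a p.1 * S p.1 p.2 * a p.2 := by
    simp [dotProduct, mulVec, Finset.mul_sum, Fintype.sum_prod_type, mul_assoc]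
  rw [hsum]
  refine Finset.sum_involution (fun p _ => p.swap) (fun p _ => ?_) (fun p _ hp hswap => ?_)
    (fun _ _ => Finset.mem_univ _) (fun p _ => p.swap_swap)
  · rw [Prod.fst_swap, Prod.snd_swap, hS.apply p.1 p.2,
      show a p.2 * S p.1 p.2 * a p.1 = a p.1 * S p.1 p.2 * a p.2 by ring]
    exact CharTwo.add_self_eq_zero _
  · obtain ⟨k, l⟩ := p
    obtain rfl : l = k := congrArg Prod.fst hswap
    exact absurd (by rw [hd, mul_zero, zero_mul]) hp

theorem IsSymm.diag_mul_mul_transpose_eq_zero (hS : S.IsSymm) (hd : ∀ i, S i i = 0)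
    (A : Matrix l n R) (i : l) : (A * S * Aᵀ) i i = 0 := by
  have hdiag : (A * S * Aᵀ) i i = A i ⬝ᵥ S *ᵥ A i := by
    rw [Matrix.mul_assoc]
    simp [mul_apply, dotProduct, mulVec]
  rw [hdiag, hS.dotProduct_mulVec_self_eq_zero hd]

end CharTwo

end Matrix

namespace InH

variable {m : ℕ} {M N : Matrix (Fin m ⊕ Fin m) (Fin m ⊕ Fin m) (ZMod 2)}

theorem mul (hM : InH m M) (hN : InH m N) : InH m (M * N) := by
  obtain ⟨A, S, hA, hS, hSd, rfl⟩ := hM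
  obtain ⟨B, T, hB, hT, hTd, rfl⟩ := hN
  have hBd : IsUnit B.det := (isUnit_iff_isUnit_det B).mp hB
  refine ⟨A * B, T + B⁻¹ * S * B⁻¹ᵀ, hA.mul hB, hT.add (hS.mul_mul_transpose _),
    fun i => ?_, ?_⟩
  · rw [Matrix.add_apply, hTd, hS.diag_mul_mul_transpose_eq_zero hSd, add_zero]
  · rw [fromBlocks_multiply]
    simp only [Matrix.mul_zero, Matrix.zero_mul, add_zero, zero_add, transpose_mul,
      Matrix.mul_inv_rev, Matrix.mul_add, Matrix.mul_assoc, mul_nonsing_inv_cancel_left _ _ hBd,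
      transpose_nonsing_inv]

theorem inv (hM : InH m M) : InH m M⁻¹ := by
  obtain ⟨A, S, hA, hS, hSd, rfl⟩ := hM
  have hAd : IsUnit A.det := (isUnit_iff_isUnit_det A).mp hA
  have hAtd : IsUnit Aᵀ.det := by rwa [det_transpose]
  rw [inv_fromBlocks_zero₂₁_of_isUnit_iff _ _ _
    (iff_of_true hA (isUnit_nonsing_inv_iff.mpr ((isUnit_transpose A).mpr hA)))]
  refine ⟨A⁻¹, -(A * S * Aᵀ), isUnit_nonsing_inv_iff.mpr hA, (hS.mul_mul_transpose A).neg,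
    fun i => by rw [neg_apply, hS.diag_mul_mul_transpose_eq_zero hSd, neg_zero], ?_⟩
  rw [transpose_nonsing_inv, nonsing_inv_nonsing_inv _ hAtd, Matrix.mul_neg, Matrix.mul_assoc,
    Matrix.mul_assoc, nonsing_inv_mul_cancel_left _ _ hAd]

theorem isUnit (hM : InH m M) : IsUnit M := by
  obtain ⟨A, S, hA, -, -, rfl⟩ := hM
  exact isUnit_fromBlocks_zero₂₁.mpr
    ⟨hA, isUnit_nonsing_inv_iff.mpr ((isUnit_transpose A).mpr hA)⟩

end InH

theorem stmt6 (m : ℕ) (hm : 1 ≤ m) (v w : Fin m ⊕ Fin m → ZMod 2)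
    (hv : (fun i => v (Sum.inl i)) ⬝ᵥ (fun i => v (Sum.inr i)) = 1)
    (hw : (fun i => w (Sum.inl i)) ⬝ᵥ (fun i => w (Sum.inr i)) = 1) :
    ∃ M, InH m M ∧ M.mulVec v = w := by
  obtain ⟨A, S, hA, hS, hSd, hAv⟩ := exists_fromBlocks_mulVec_single_eq hv ⟨0, hm⟩
  obtain ⟨B, T, hB, hT, hTd, hBw⟩ := exists_fromBlocks_mulVec_single_eq hw ⟨0, hm⟩
  set P := fromBlocks A (A * S) 0 Aᵀ⁻¹
  have hP : InH m P := ⟨A, S, hA, hS, hSd, rfl⟩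
  refine ⟨fromBlocks B (B * T) 0 Bᵀ⁻¹ * P⁻¹, InH.mul ⟨B, T, hB, hT, hTd, rfl⟩ hP.inv, ?_⟩
  rw [← mulVec_mulVec, ← hAv, mulVec_mulVec _ P⁻¹ P,
    nonsing_inv_mul _ ((isUnit_iff_isUnit_det P).mp hP.isUnit), one_mulVec, hBw]
end

section
/- Let m ≥ 2 and define on V = 𝔽₂^{2m} the relations ρ₁ (equality), ρ₂ = {(v,w): v+w ∈ S_m\{0}}, ρ₃ = {(v,w): v+w ∈ Q_m\S_m}, ρ₄ = {(v,w): v+w ∉ Q_m}. Then (V; ρ₁,ρ₂,ρ₃,ρ₄) is a coherent configuration: the ρᵢ partition V×V, ρ₁ is the diagonal, each ρᵢ is symmetric, and for all i,j,k the number of z with (x,z) ∈ ρᵢ and (z,y) ∈ ρⱼ is the same for all (x,y) ∈ ρ_k. -/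
open Matrix

/-- The four basic relations `ρ₁, ρ₂, ρ₃, ρ₄` on `𝔽₂^{2m}`. -/
def rho (m : ℕ) : Fin 4 → ((Fin m → ZMod 2) × (Fin m → ZMod 2)) →
    ((Fin m → ZMod 2) × (Fin m → ZMod 2)) → Prop
  | 0 => fun x y => x = y
  | 1 => fun x y => (x + y).2 = 0 ∧ x + y ≠ 0
  | 2 => fun x y => (x + y).1 ⬝ᵥ (x + y).2 = 0 ∧ (x + y).2 ≠ 0
  | 3 => fun x y => (x + y).1 ⬝ᵥ (x + y).2 ≠ 0

/-! The relation `ρᵢ` holds between `x` and `y` exactly when `x + y` lies in the `i`-th of the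
classes `{0}`, `S_m \ {0}`, `Q_m \ S_m`, `𝔽₂^{2m} \ Q_m`. So the number of `z` with
`(x, z) ∈ ρᵢ` and `(z, y) ∈ ρⱼ` depends only on `x + y`, and it does not change when `x + y` is
moved by an additive automorphism preserving the four classes. Linear maps preserving the form
`(a, b) ↦ a ⬝ᵥ b` and the subspace `S_m` are such automorphisms, and they act transitively on each
class: `(a, b) ↦ (g a, g⁻ᵀ b)` with `g ∈ GL_m` moves any nonzero `a` (or any nonzero `b`) to any
other one, and for fixed `b ≠ 0` the shear `(a, b) ↦ (a + (w ⬝ᵥ b) • u - (u ⬝ᵥ b) • w, b)` with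
`w ⬝ᵥ b = 1` moves `a` to any `a'` with `a ⬝ᵥ b = a' ⬝ᵥ b`. -/

theorem LinearEquiv.exists_apply_eq_of_ne_zero {K V : Type*} [Field K] [AddCommGroup V]
    [Module K V] {v w : V} (hv : v ≠ 0) (hw : w ≠ 0) : ∃ g : V ≃ₗ[K] V, g v = w := by
  obtain ⟨g, hg⟩ := Submodule.exists_linearEquiv_restrict_eq
    (LinearEquiv.coord K V v hv ≪≫ₗ LinearEquiv.toSpanNonzeroSingleton K V w hw)
  refine ⟨g, ?_⟩
  simpa [LinearEquiv.coord_self] using (hg ⟨v, Submodule.mem_span_singleton_self v⟩).symm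

theorem exists_dotProduct_eq_one {K n : Type*} [Field K] [Fintype n] [DecidableEq n]
    {b : n → K} (hb : b ≠ 0) : ∃ w : n → K, w ⬝ᵥ b = 1 := by
  obtain ⟨i, hi⟩ := Function.ne_iff.mp hb
  exact ⟨Pi.single i (b i)⁻¹, by simp [single_dotProduct, inv_mul_cancel₀ hi]⟩

theorem Nat.card_translate_addEquiv {G ι : Type*} [AddCommGroup G] (f : G → ι) (φ : G ≃+ G)
    (hφ : ∀ v, f (φ v) = f v) (i j : ι) (v : G) :
    Nat.card {w // f w = i ∧ f (w + φ v) = j} = Nat.card {w // f w = i ∧ f (w + v) = j} :=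
  (Nat.card_congr <| φ.toEquiv.subtypeEquiv fun w => by simp [← map_add, hφ]).symm

section Hyperbolic

variable {R : Type*} [CommRing R] {n : Type*} [Fintype n]

def hyperbolicShear (u w : n → R) : ((n → R) × (n → R)) ≃ₗ[R] (n → R) × (n → R) where
  toFun p := (p.1 + (w ⬝ᵥ p.2) • u - (u ⬝ᵥ p.2) • w, p.2)
  invFun p := (p.1 - (w ⬝ᵥ p.2) • u + (u ⬝ᵥ p.2) • w, p.2)
  map_add' p p' := by
    ext1
    · simp only [Prod.fst_add, Prod.snd_add, dotProduct_add, add_smul]; abel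
    · rfl
  map_smul' r p := by
    ext1
    · simp only [Prod.smul_fst, Prod.smul_snd, dotProduct_smul, smul_eq_mul, mul_smul, smul_add,
        smul_sub, RingHom.id_apply]
    · rfl
  left_inv p := Prod.ext (by dsimp only; abel) rfl
  right_inv p := Prod.ext (by dsimp only; abel) rfl

theorem hyperbolicShear_apply (u w : n → R) (p : (n → R) × (n → R)) :
    hyperbolicShear u w p = (p.1 + (w ⬝ᵥ p.2) • u - (u ⬝ᵥ p.2) • w, p.2) := rfl

theorem hyperbolicShear_apply_of_dotProduct_eq {a b c w : n → R} (hw : w ⬝ᵥ b = 1)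
    (hc : c ⬝ᵥ b = a ⬝ᵥ b) : hyperbolicShear (a - c) w (c, b) = (a, b) := by
  simp [hyperbolicShear_apply, hw, sub_dotProduct, hc]

def PreservesFormAndFirstFactor (φ : ((n → R) × (n → R)) ≃ₗ[R] (n → R) × (n → R)) : Prop :=
  ∀ p, (φ p).1 ⬝ᵥ (φ p).2 = p.1 ⬝ᵥ p.2 ∧ ((φ p).2 = 0 ↔ p.2 = 0)

namespace PreservesFormAndFirstFactor

theorem refl : PreservesFormAndFirstFactor (LinearEquiv.refl R ((n → R) × (n → R))) :=
  fun _ => ⟨rfl, Iff.rfl⟩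

theorem trans {φ ψ : ((n → R) × (n → R)) ≃ₗ[R] (n → R) × (n → R)}
    (hφ : PreservesFormAndFirstFactor φ) (hψ : PreservesFormAndFirstFactor ψ) :
    PreservesFormAndFirstFactor (φ.trans ψ) := fun p => by
  simp only [LinearEquiv.trans_apply, hψ (φ p), hφ p, and_self]

theorem hyperbolicShear (u w : n → R) : PreservesFormAndFirstFactor (hyperbolicShear u w) :=
  fun p => ⟨by
    simp only [hyperbolicShear_apply, sub_dotProduct, add_dotProduct, smul_dotProduct, smul_eq_mul]
    ring, Iff.rfl⟩

end PreservesFormAndFirstFactor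

variable [DecidableEq n]

noncomputable def LinearEquiv.contragredient (g : (n → R) ≃ₗ[R] (n → R)) :
    (n → R) ≃ₗ[R] (n → R) :=
  LinearEquiv.ofLinearMap (toLin' (LinearMap.toMatrix' g.symm.toLinearMap)ᵀ)
    (toLin' (LinearMap.toMatrix' g.toLinearMap)ᵀ)
    (by rw [← toLin'_mul, ← transpose_mul, ← LinearMap.toMatrix'_comp]; simp)
    (by rw [← toLin'_mul, ← transpose_mul, ← LinearMap.toMatrix'_comp]; simp)

theorem LinearEquiv.dotProduct_contragredient (g : (n → R) ≃ₗ[R] (n → R)) (x y : n → R) :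
    g x ⬝ᵥ g.contragredient y = x ⬝ᵥ y := by
  simp [contragredient, dotProduct_mulVec, vecMul_transpose]

namespace PreservesFormAndFirstFactor

theorem prodCongr_contragredient (g : (n → R) ≃ₗ[R] (n → R)) :
    PreservesFormAndFirstFactor (g.prodCongr g.contragredient) := fun p => by
  simp [g.dotProduct_contragredient]

theorem contragredient_prodCongr (g : (n → R) ≃ₗ[R] (n → R)) :
    PreservesFormAndFirstFactor (g.contragredient.prodCongr g) := fun p => by
  simp [dotProduct_comm _ (g _), g.dotProduct_contragredient, dotProduct_comm p.2]

end PreservesFormAndFirstFactor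

end Hyperbolic

section Transitivity

variable {K : Type*} [Field K] {n : Type*} [Fintype n] [DecidableEq n]

theorem PreservesFormAndFirstFactor.exists_apply_eq_of_snd_eq_zero {a a' : n → K} (ha : a ≠ 0)
    (ha' : a' ≠ 0) : ∃ φ, PreservesFormAndFirstFactor φ ∧ φ (a, 0) = (a', 0) := by
  obtain ⟨g, hg⟩ := LinearEquiv.exists_apply_eq_of_ne_zero (K := K) ha ha'
  exact ⟨_, prodCongr_contragredient g, by simp [hg]⟩

theorem PreservesFormAndFirstFactor.exists_apply_eq_of_snd_ne_zero {a b a' b' : n → K}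
    (hb : b ≠ 0) (hb' : b' ≠ 0) (hab : a ⬝ᵥ b = a' ⬝ᵥ b') :
    ∃ φ, PreservesFormAndFirstFactor φ ∧ φ (a, b) = (a', b') := by
  obtain ⟨g, hg⟩ := LinearEquiv.exists_apply_eq_of_ne_zero (K := K) hb hb'
  obtain ⟨w, hw⟩ := exists_dotProduct_eq_one hb'
  set c := g.contragredient a
  have hc : c ⬝ᵥ b' = a' ⬝ᵥ b' := by
    rw [← hab, ← hg, dotProduct_comm, g.dotProduct_contragredient, dotProduct_comm]
  refine ⟨_, (contragredient_prodCongr g).trans (hyperbolicShear (a' - c) w), ?_⟩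
  rw [LinearEquiv.trans_apply, LinearEquiv.prodCongr_apply, hg]
  exact hyperbolicShear_apply_of_dotProduct_eq hw hc

end Transitivity

section Binary

variable {n : Type*} [Fintype n]

def relationClass (p : (n → ZMod 2) × (n → ZMod 2)) : Fin 4 :=
  if p = 0 then 0 else if p.2 = 0 then 1 else if p.1 ⬝ᵥ p.2 = 0 then 2 else 3

theorem relationClass_map
    {φ : ((n → ZMod 2) × (n → ZMod 2)) ≃ₗ[ZMod 2] (n → ZMod 2) × (n → ZMod 2)}
    (hφ : PreservesFormAndFirstFactor φ) (p : (n → ZMod 2) × (n → ZMod 2)) :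
    relationClass (φ p) = relationClass p := by
  simp only [relationClass, LinearEquiv.map_eq_zero_iff, (hφ p).1, (hφ p).2]

variable [DecidableEq n]

theorem exists_apply_eq_of_relationClass_eq {p p' : (n → ZMod 2) × (n → ZMod 2)}
    (h : relationClass p = relationClass p') :
    ∃ φ, PreservesFormAndFirstFactor φ ∧ φ p = p' := by
  obtain ⟨a, b⟩ := p
  obtain ⟨a', b'⟩ := p'
  unfold relationClass at h
  split_ifs at h <;> simp only [Fin.reduceEq] at h
  · rename_i hp hp'
    exact ⟨_, .refl, hp.trans hp'.symm⟩
  · rename_i hp hb hp' hb'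
    dsimp only at hb hb'
    subst hb hb'
    exact PreservesFormAndFirstFactor.exists_apply_eq_of_snd_eq_zero
      (by simpa using hp) (by simpa using hp')
  · rename_i _ hb hq _ hb' hq'
    exact PreservesFormAndFirstFactor.exists_apply_eq_of_snd_ne_zero hb hb' (hq.trans hq'.symm)
  · rename_i _ hb hq _ hb' hq'
    have hne : ∀ x y : ZMod 2, x ≠ 0 → y ≠ 0 → x = y := by decide
    exact PreservesFormAndFirstFactor.exists_apply_eq_of_snd_ne_zero hb hb' (hne _ _ hq hq')

theorem card_relationClass_eq_of_relationClass_eq (i j : Fin 4)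
    {v v' : (n → ZMod 2) × (n → ZMod 2)} (h : relationClass v = relationClass v') :
    Nat.card {w // relationClass w = i ∧ relationClass (w + v) = j} =
      Nat.card {w // relationClass w = i ∧ relationClass (w + v') = j} := by
  obtain ⟨φ, hφ, rfl⟩ := exists_apply_eq_of_relationClass_eq h
  exact (Nat.card_translate_addEquiv relationClass φ.toAddEquiv (relationClass_map hφ) i j v).symm

end Binary

theorem rho_iff_relationClass (m : ℕ) (i : Fin 4) (x y : (Fin m → ZMod 2) × (Fin m → ZMod 2)) :
    rho m i x y ↔ relationClass (x + y) = i := by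
  have hxy : x = y ↔ x + y = 0 := by rw [← ZModModule.sub_eq_add, sub_eq_zero]
  fin_cases i <;> simp only [rho, hxy] <;> generalize x + y = v <;> unfold relationClass <;>
    split_ifs <;> simp_all

theorem card_rho_comp_eq (m : ℕ) (i j : Fin 4) (x y : (Fin m → ZMod 2) × (Fin m → ZMod 2)) :
    Nat.card {z // rho m i x z ∧ rho m j z y} =
      Nat.card {w // relationClass w = i ∧ relationClass (w + (x + y)) = j} := by
  refine Nat.card_congr <| (Equiv.addLeft x).subtypeEquiv fun z => ?_
  have hx : x + z + (x + y) = z + y := by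
    rw [add_comm x z, ZModModule.add_add_add_cancel]
  simp only [rho_iff_relationClass, Equiv.coe_addLeft, hx]

theorem stmt15_general (m : ℕ) :
    (∀ x y, ∃! i : Fin 4, rho m i x y) ∧
    (∀ x y, rho m 0 x y ↔ x = y) ∧
    (∀ i x y, rho m i x y ↔ rho m i y x) ∧
    (∀ i j k : Fin 4, ∃ p : ℕ, ∀ x y, rho m k x y →
        Nat.card {z // rho m i x z ∧ rho m j z y} = p) := by
  refine ⟨fun x y => ?_, fun x y => Iff.rfl, fun i x y => ?_, fun i j k => ?_⟩
  · simpa only [rho_iff_relationClass] using existsUnique_eq'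
  · rw [rho_iff_relationClass, rho_iff_relationClass, add_comm]
  by_cases hk : ∃ x₀ y₀, rho m k x₀ y₀
  · obtain ⟨x₀, y₀, h₀⟩ := hk
    refine ⟨Nat.card {z // rho m i x₀ z ∧ rho m j z y₀}, fun x y h => ?_⟩
    rw [card_rho_comp_eq, card_rho_comp_eq]
    rw [rho_iff_relationClass] at h h₀
    exact card_relationClass_eq_of_relationClass_eq i j (h.trans h₀.symm)
  · exact ⟨0, fun x y h => absurd ⟨x, y, h⟩ hk⟩

theorem stmt15 (m : ℕ) (hm : 2 ≤ m) :
    (∀ x y, ∃! i : Fin 4, rho m i x y) ∧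
    (∀ x y, rho m 0 x y ↔ x = y) ∧
    (∀ i x y, rho m i x y ↔ rho m i y x) ∧
    (∀ i j k : Fin 4, ∃ p : ℕ, ∀ x y, rho m k x y →
        Nat.card {z // rho m i x z ∧ rho m j z y} = p) :=
  stmt15_general m
end
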